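/- arXiv:1501.01022 — 3 statements merged into one kernel-verified Lean document; each statement's English description precedes it below -/
import Mathlib

section
/- There exists a function j : ZFSet → ZFSet satisfying the pair-tagging recursion, i.e., a function j such that for all y, z : ZFSet, z ∈ j(y) if and only if either z = j(x) for some x ∈ y, or z = {∅, y}. -/
/-- A function `j : ZFSet → ZFSet` satisfies the pair-tagging recursion if
`j y = { j x : x ∈ y } ∪ {{∅, y}}`, i.e. `z ∈ j y ↔ (∃ x ∈ y, z = j x) ∨ z = {∅, y}`. -/
def PairTagging (j : ZFSet → ZFSet) : Prop :=
  ∀ y z : ZFSet, z ∈ j y ↔ ((∃ x ∈ y, z = j x) ∨ z = ({∅, y} : ZFSet))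

/- `∈`-recursion: the members of `y` form a small type, so the family of earlier values
`x ↦ pairTag x` over them is collected into a set by `ZFSet.range`. -/
noncomputable def pairTag (y : ZFSet) : ZFSet :=
  insert {∅, y} (ZFSet.range fun x : y => pairTag x)
termination_by y
decreasing_by exact x.2

theorem mem_pairTag {y z : ZFSet} :
    z ∈ pairTag y ↔ (∃ x ∈ y, z = pairTag x) ∨ z = {∅, y} := by
  rw [pairTag, ZFSet.mem_insert_iff, ZFSet.mem_range, or_comm]
  simp only [Subtype.exists, exists_prop, eq_comm]

/-- There exists a function satisfying the pair-tagging recursion. -/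
theorem exists_pairTagging : ∃ j : ZFSet → ZFSet, PairTagging j :=
  ⟨pairTag, fun _ _ => mem_pairTag⟩
end

section
/- If j : ZFSet → ZFSet satisfies the pair-tagging recursion, then for every y : ZFSet the pair {∅, y} is the unique element of j(y) that contains ∅; that is, {∅, y} ∈ j(y), and whenever z ∈ j(y) and ∅ ∈ z, then z = {∅, y}. -/
namespace PairTagging

variable {j : ZFSet → ZFSet}

theorem pair_mem (hj : PairTagging j) (y : ZFSet) : ({∅, y} : ZFSet) ∈ j y :=
  (hj y _).2 (Or.inr rfl)

theorem empty_notMem (hj : PairTagging j) (y : ZFSet) : (∅ : ZFSet) ∉ j y := by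
  intro h
  rcases (hj y ∅).1 h with ⟨x, -, hx⟩ | hpair
  · exact (ZFSet.eq_empty _).1 hx.symm _ (hj.pair_mem x)
  · exact (ZFSet.eq_empty _).1 hpair.symm ∅ (ZFSet.mem_pair.2 (Or.inl rfl))

end PairTagging

/-- If `j` satisfies the pair-tagging recursion then `{∅, y}` is the unique element of
`j y` containing `∅`. -/
theorem pairTagging_unique_pair (j : ZFSet → ZFSet) (hj : PairTagging j) (y : ZFSet) :
    ({∅, y} : ZFSet) ∈ j y ∧ ∀ z : ZFSet, z ∈ j y → (∅ : ZFSet) ∈ z → z = ({∅, y} : ZFSet) := by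
  refine ⟨hj.pair_mem y, fun z hz hz_empty => ?_⟩
  rcases (hj y z).1 hz with ⟨x, -, rfl⟩ | hpair
  · exact absurd hz_empty (hj.empty_notMem x)
  · exact hpair
end

section
/- The long rational line ℚ·ω₁ is universal for ω₁-like linear orders: every ω₁-like linear order A admits an order embedding into the lexicographic order on ω₁ × ℚ. -/
open Cardinal

/-- The long rational line `ℚ·ω₁`: the lexicographic order on `ω₁ × ℚ`, where `ω₁` is
realized as the ordinals below the first uncountable ordinal `(aleph 1).ord`. -/
abbrev LongRationalLine : Type 1 := (Set.Iio (aleph 1).ord) ×ₗ ℚ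

/-!
Build a strictly increasing sequence `s : ω₁ → A` by transfinite recursion: the countably many
earlier values always have a strict upper bound, since a countable set without one would be
cofinal and `A` would be a countable union of countable initial segments. The sequence is
cofinal, for otherwise its uncountable range would lie in a countable initial segment. Sending
`x` to the least `i` with `x < s i` is then monotone, and its fibers lie in the countable
segments below the `s i`; embedding each fiber into `ℚ` embeds `A` into `ω₁ ×ₗ ℚ`.
-/

section LinearOrder

variable {A : Type*} [LinearOrder A]

theorem exists_strictMonoOn_rat_of_countable {S : Set A} (hS : S.Countable) :
    ∃ g : A → ℚ, StrictMonoOn g S := by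
  have := hS.to_subtype
  obtain ⟨e⟩ := Order.embedding_from_countable_to_dense S ℚ
  classical
  refine ⟨fun x => if hx : x ∈ S then e ⟨x, hx⟩ else 0, fun x hx y hy hxy => ?_⟩
  simpa [hx, hy] using hxy

theorem nonempty_orderEmbedding_lex_rat {B : Type*} [LinearOrder B] (r : A → B)
    (hr : Monotone r) (hfib : ∀ b, (r ⁻¹' {b}).Countable) : Nonempty (A ↪o B ×ₗ ℚ) := by
  choose g hg using fun b => exists_strictMonoOn_rat_of_countable (hfib b)
  refine ⟨OrderEmbedding.ofStrictMono (fun x => toLex (r x, g (r x) x)) fun x y hxy => ?_⟩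
  rcases (hr hxy.le).lt_or_eq with hlt | heq
  · exact Prod.Lex.toLex_lt_toLex.2 (Or.inl hlt)
  · refine Prod.Lex.toLex_lt_toLex.2 (Or.inr ⟨heq, ?_⟩)
    rw [heq]
    exact hg (r y) heq rfl hxy

theorem countable_Iic_of_countable_Iio (hseg : ∀ a : A, (Set.Iio a).Countable) (a : A) :
    (Set.Iic a).Countable :=
  Set.Iio_insert (a := a) ▸ (hseg a).insert a

theorem exists_forall_lt_of_countable (hunc : ¬Countable A)
    (hseg : ∀ a : A, (Set.Iio a).Countable) {S : Set A} (hS : S.Countable) :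
    ∃ b, ∀ x ∈ S, x < b := by
  by_contra! hS_cofinal
  have hcover : (Set.univ : Set A) ⊆ ⋃ x ∈ S, Set.Iic x := fun b _ => by
    obtain ⟨x, hx, hbx⟩ := hS_cofinal b
    exact Set.mem_biUnion hx hbx
  exact hunc (Set.countable_univ_iff.1
    ((hS.biUnion fun x _ => countable_Iic_of_countable_Iio hseg x).mono hcover))

theorem exists_strictMono_of_forall_countable_exists_gt {W : Type*} [LinearOrder W]
    [WellFoundedLT W] (hW : ∀ i : W, (Set.Iio i).Countable)
    (hA : ∀ S : Set A, S.Countable → ∃ b, ∀ x ∈ S, x < b) : ∃ s : W → A, StrictMono s := by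
  choose ub hub using hA
  let s : W → A := WellFoundedLT.fix fun i prev =>
    ub (Set.range fun j : Set.Iio i => prev j j.2)
      (have := (hW i).to_subtype; Set.countable_range _)
  refine ⟨s, fun j i hji => ?_⟩
  have hs : s i = ub (Set.range fun j : Set.Iio i => s j) _ := WellFoundedLT.fix_eq _ i
  rw [hs]
  exact hub _ _ _ ⟨⟨j, hji⟩, rfl⟩

theorem StrictMono.exists_lt_apply {W : Type*} [LinearOrder W] (hunc : ¬Countable W)
    (hseg : ∀ a : A, (Set.Iio a).Countable) {s : W → A} (hs : StrictMono s) (x : A) :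
    ∃ i, x < s i := by
  by_contra! hbdd
  have hrange : (Set.range s).Countable :=
    (countable_Iic_of_countable_Iio hseg x).mono (Set.range_subset_iff.2 hbdd)
  have := hrange.to_subtype
  exact hunc (Set.rangeFactorization_injective.2 hs.injective).countable

theorem exists_monotone_countable_fibers {W : Type*} [LinearOrder W] [WellFoundedLT W]
    (hseg : ∀ a : A, (Set.Iio a).Countable) (s : W → A) (hs : ∀ x, ∃ i, x < s i) :
    ∃ r : A → W, Monotone r ∧ ∀ i, (r ⁻¹' {i}).Countable := by
  have hwf : WellFounded ((· < ·) : W → W → Prop) := wellFounded_lt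
  let r : A → W := fun x => hwf.min {i | x < s i} (hs x)
  have hr : ∀ x, x < s (r x) := fun x => hwf.min_mem _ (hs x)
  refine ⟨r, fun x y hxy => hwf.min_le (hxy.trans_lt (hr y)), fun i => (hseg (s i)).mono ?_⟩
  rintro x rfl
  exact hr x

end LinearOrder

theorem countable_Iio_of_mem_Iio_omega_one (i : Set.Iio (aleph 1).ord) :
    (Set.Iio i).Countable := by
  have hi : (Set.Iio i.1).Countable := by
    rw [← Set.countable_coe_iff, ← Cardinal.mk_le_aleph0_iff, Cardinal.mk_Iio_ordinal,
      Cardinal.lift_le_aleph0, ← Cardinal.lt_aleph_one_iff, ← Cardinal.lt_ord]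
    exact i.2
  exact (hi.preimage Subtype.val_injective).mono fun j hj => hj

theorem not_countable_Iio_omega_one : ¬Countable (Set.Iio (aleph 1).ord) := by
  rw [not_countable_iff, ← Cardinal.aleph0_lt_mk_iff, Cardinal.mk_Iio_ordinal, Cardinal.card_ord]
  simp

/-- The long rational line is universal for ω₁-like linear orders: every ω₁-like linear
order admits an order embedding into `ℚ·ω₁`. -/
theorem longRationalLine_universal (A : Type*) [LinearOrder A]
    (hunc : ¬ Countable A) (hseg : ∀ a : A, {x : A | x < a}.Countable) :
    Nonempty (A ↪o LongRationalLine) := by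
  obtain ⟨s, hs⟩ := exists_strictMono_of_forall_countable_exists_gt
    countable_Iio_of_mem_Iio_omega_one fun S => exists_forall_lt_of_countable hunc hseg
  obtain ⟨r, hr, hfib⟩ := exists_monotone_countable_fibers hseg s
    (hs.exists_lt_apply not_countable_Iio_omega_one hseg)
  exact nonempty_orderEmbedding_lex_rat r hr hfib
end
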